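/- Suppose b⁴ = 1 and c ∈ ℂ satisfies c² = −b. Then for every ε ∈ (0, 1/2], every R ≥ 10, every x ∈ ℂ and every n ≥ 0, the iterate Hⁿ(x, c) does not belong to V⁻ = {(x,y) ∈ ℂ² : |xy| > max{R, |x|^{3/2}, (1/ε)|y|^{3/2}}}; that is, the line {(x, c) : x ∈ ℂ} is contained in K⁺ = ℂ² \ ⋃_{n≥0} H⁻ⁿ(V⁻). -/

import Mathlib

/-!
On the curve `y² = -b` the second iterate acts on the second coordinate by `y ↦ b² y`, which
preserves `y² = -b` because `b⁴ = 1`. Hence every even iterate of `(x, c)` has `|y| = 1`, and then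
`|xy| = |x| > max(R, |x|^{3/2})` is impossible. For the odd iterates `(xy, x² + by)`, put
`t = |x|` and `s = |x² + by| ≥ t² - 1`: membership in `V⁻` forces `ts > 2 s^{3/2}`, i.e. `t² > 4s`,
whence `s < 1/3`, `t < 2` and `|xy (x² + by)| = ts < 1 ≤ R`.
-/

open Complex Filter Topology

/-- The two-dimensional model map `H(x,y) = (xy, x² + by)` on `ℂ²`. -/
noncomputable def H2 (b : ℂ) (p : ℂ × ℂ) : ℂ × ℂ :=
  (p.1 * p.2, p.1 ^ 2 + b * p.2)

/-- The two-dimensional `V⁻ = {(x,y) : |xy| > max{R, |x|^{3/2}, (1/ε)|y|^{3/2}}}`. -/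
noncomputable def Vminus2 (ε R : ℝ) : Set (ℂ × ℂ) :=
  {p | ‖p.1 * p.2‖ >
    max R (max ((‖p.1‖) ^ ((3 : ℝ) / 2))
      ((1 / ε) * (‖p.2‖) ^ ((3 : ℝ) / 2)))}

lemma mapsTo_H2_iterate_two {b : ℂ} (hb4 : b ^ 4 = 1) :
    Set.MapsTo (H2 b)^[2] {p | p.2 ^ 2 = -b} {p | p.2 ^ 2 = -b} := by
  intro p (hp : p.2 ^ 2 = -b)
  have hsnd : ((H2 b)^[2] p).2 = b ^ 2 * p.2 := by
    simp only [Function.iterate_succ, Function.iterate_zero, Function.comp_apply, id, H2]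
    linear_combination p.1 ^ 2 * hp
  change ((H2 b)^[2] p).2 ^ 2 = -b
  rw [hsnd]
  linear_combination p.2 ^ 2 * hb4 + hp

lemma norm_eq_one_of_sq_eq_neg {b y : ℂ} (hb : ‖b‖ = 1) (hy : y ^ 2 = -b) : ‖y‖ = 1 := by
  have : ‖y‖ ^ 2 = 1 := by rw [← norm_pow, hy, norm_neg, hb]
  exact (pow_eq_one_iff_of_nonneg (norm_nonneg y) two_ne_zero).mp this

lemma notMem_Vminus2_of_norm_snd_eq_one {ε R : ℝ} (hR : 1 ≤ R) {p : ℂ × ℂ} (hy : ‖p.2‖ = 1) :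
    p ∉ Vminus2 ε R := by
  intro hp
  simp only [Vminus2, Set.mem_ofPred_eq, gt_iff_lt, max_lt_iff, norm_mul, hy, mul_one] at hp
  obtain ⟨hRt, ht, -⟩ := hp
  have : ‖p.1‖ ≤ ‖p.1‖ ^ ((3 : ℝ) / 2) :=
    Real.self_le_rpow_of_one_le (by linarith) (by norm_num)
  linarith

lemma four_mul_lt_sq_of_two_mul_rpow_lt {s t : ℝ} (hs : 0 < s)
    (h : 2 * s ^ ((3 : ℝ) / 2) < t * s) : 4 * s < t ^ 2 := by
  have hsqrt : s ^ ((3 : ℝ) / 2) = √s * s := by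
    rw [Real.sqrt_eq_rpow, show (3 : ℝ) / 2 = 1 / 2 + 1 by norm_num, Real.rpow_add hs,
      Real.rpow_one]
  rw [hsqrt, ← mul_assoc] at h
  have h2 : 2 * √s < t := lt_of_mul_lt_mul_right h hs.le
  nlinarith [Real.sq_sqrt hs.le, Real.sqrt_nonneg s]

lemma H2_notMem_Vminus2_of_norm_snd_eq_one {b : ℂ} (hb : ‖b‖ = 1) {ε R : ℝ} (hε : 0 < ε)
    (hε2 : ε ≤ 1 / 2) (hR : 1 ≤ R) {p : ℂ × ℂ} (hy : ‖p.2‖ = 1) :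
    H2 b p ∉ Vminus2 ε R := by
  intro hp
  simp only [H2, Vminus2, Set.mem_ofPred_eq, gt_iff_lt, max_lt_iff, norm_mul, hy,
    mul_one] at hp
  obtain ⟨hRts, -, hts⟩ := hp
  set t := ‖p.1‖
  set s := ‖p.1 ^ 2 + b * p.2‖
  have ht : 0 ≤ t := norm_nonneg _
  have hs : 0 < s := by
    by_contra! hs0
    nlinarith
  have hsq : t ^ 2 ≤ s + 1 := by
    have := norm_sub_norm_le (p.1 ^ 2) (-(b * p.2))
    rw [sub_neg_eq_add, norm_neg, norm_mul, hb, hy, mul_one, norm_pow] at this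
    linarith
  have h2 : 2 * s ^ ((3 : ℝ) / 2) < t * s := by
    have : 2 ≤ 1 / ε := by rw [le_div_iff₀ hε]; linarith
    nlinarith [Real.rpow_nonneg hs.le ((3 : ℝ) / 2)]
  have h4 := four_mul_lt_sq_of_two_mul_rpow_lt hs h2
  have hs3 : s < 1 / 3 := by linarith
  have ht2 : t < 2 := by nlinarith
  nlinarith

theorem stmt19_general (b : ℂ) (hb4 : b ^ 4 = 1) (c : ℂ)
    (hc : c ^ 2 = -b) (ε : ℝ) (hε : 0 < ε) (hε2 : ε ≤ 1 / 2)
    (R : ℝ) (hR : 10 ≤ R) (x : ℂ) (n : ℕ) :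
    (H2 b)^[n] (x, c) ∉ Vminus2 ε R := by
  have hb : ‖b‖ = 1 := Complex.norm_eq_one_of_pow_eq_one hb4 (by norm_num)
  have hR1 : 1 ≤ R := by linarith
  have heven (k : ℕ) : ‖((H2 b)^[2 * k] (x, c)).2‖ = 1 := by
    rw [Function.iterate_mul]
    exact norm_eq_one_of_sq_eq_neg hb ((mapsTo_H2_iterate_two hb4).iterate k hc)
  obtain ⟨k, rfl | rfl⟩ := Nat.even_or_odd' n
  · exact notMem_Vminus2_of_norm_snd_eq_one hR1 (heven k)
  · rw [Function.iterate_succ_apply']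
    exact H2_notMem_Vminus2_of_norm_snd_eq_one hb hε hε2 hR1 (heven k)

/-- if `b⁴ = 1` and `c² = −b`, then for every `ε ∈ (0, 1/2]`,
every `R ≥ 10`, every `x ∈ ℂ` and every `n ≥ 0`, the iterate `Hⁿ(x, c)` does
not belong to `V⁻`; that is, the line `{(x, c) : x ∈ ℂ}` is contained in
`K⁺ = ℂ² \ ⋃_{n≥0} H⁻ⁿ(V⁻)`. -/
theorem stmt19 (b : ℂ) (hb : b ≠ 0) (hb4 : b ^ 4 = 1) (c : ℂ)
    (hc : c ^ 2 = -b) (ε : ℝ) (hε : 0 < ε) (hε2 : ε ≤ 1 / 2)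
    (R : ℝ) (hR : 10 ≤ R) (x : ℂ) (n : ℕ) :
    (H2 b)^[n] (x, c) ∉ Vminus2 ε R :=
  stmt19_general b hb4 c hc ε hε hε2 R hR x n
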